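/- arXiv:2410.11760 — 2 statements merged into one kernel-verified Lean document; each statement's English description precedes it below -/
import Mathlib

section
/- The absolute value map |·| : ℝ → ℝ is twice epi-differentiable at every x ∈ ℝ for every y ∈ ∂|·|(x), with second-order epi-derivative the indicator function I_{K_{x,y}}. Precisely, let δ_t²(z) := (|x + t z| − |x| − t y z)/t² for t > 0 and z ∈ ℝ. Then for every z ∈ ℝ: (1) if z ∈ K_{x,y}, there exists a family (z_t)_{t>0} converging to z as t → 0⁺ with limsup_{t→0⁺} δ_t²(z_t) ≤ 0; (2) for every family (z_t)_{t>0} converging to z as t → 0⁺: if z ∈ K_{x,y} then liminf_{t→0⁺} δ_t²(z_t) ≥ 0, and if z ∉ K_{x,y} then δ_t²(z_t) tends to +∞ as t → 0⁺. -/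
open Filter Topology Set

/-! The subgradient inequality makes `δ_t² ≥ 0`, which gives the liminf bound. For `x ≠ 0` it
forces `y = sign x`, and `|·|` is linear near `x`, so `δ_t²(z) = 0` for small `t` and the constant
family is a recovery family. For `x = 0` one has exactly `δ_t²(w) = (|w| - y w) / t`, and
`|w| - y w ≥ 0` vanishes precisely on `K_{0,y}`; outside it the numerator tends to a positive limit
while being divided by `t → 0⁺`. -/

/-- The set `K_{x,y}` associated with the second-order epi-derivative of the absolute value. -/
def Kset (x y : ℝ) : Set ℝ :=
  if x ≠ 0 then Set.univ
  else if y = 1 then Set.Ici 0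
  else if y = -1 then Set.Iic 0
  else {0}

/-- `y ∈ ∂|·|(x)`. -/
def IsAbsSubgradient (x y : ℝ) : Prop :=
  ∀ w : ℝ, y * (w - x) ≤ |w| - |x|

/-- The quotient `δ_t²(w)`. -/
noncomputable def absSecondDiffQuot (x y t w : ℝ) : ℝ :=
  (|x + t * w| - |x| - t * y * w) / t ^ 2

theorem mul_le_abs_of_abs_le_one {y : ℝ} (hy : |y| ≤ 1) (w : ℝ) : y * w ≤ |w| :=
  calc y * w ≤ |y| * |w| := by rw [← abs_mul]; exact le_abs_self _
    _ ≤ |w| := mul_le_of_le_one_left (abs_nonneg w) hy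

theorem abs_le_one_of_abs_subgradient {x y : ℝ} (hy : IsAbsSubgradient x y) :
    |y| ≤ 1 := by
  have h1 : |x + 1| ≤ |x| + 1 := by simpa using abs_add_le x 1
  have h2 : |x - 1| ≤ |x| + 1 := by simpa using abs_sub x 1
  exact abs_le.2 ⟨by linarith [hy (x - 1)], by linarith [hy (x + 1)]⟩

theorem mul_eq_abs_of_abs_subgradient {x y : ℝ} (hy : IsAbsSubgradient x y) :
    y * x = |x| := by
  have hge : |x| ≤ y * x := by linarith [hy 0, abs_zero (α := ℝ)]
  exact le_antisymm (mul_le_abs_of_abs_le_one (abs_le_one_of_abs_subgradient hy) x) hge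

theorem absSecondDiffQuot_nonneg {x y t : ℝ} (hy : IsAbsSubgradient x y)
    (ht : 0 < t) (w : ℝ) : 0 ≤ absSecondDiffQuot x y t w := by
  have h := hy (x + t * w)
  exact div_nonneg (by nlinarith) (by positivity)

theorem absSecondDiffQuot_zero_left (y w : ℝ) {t : ℝ} (ht : 0 < t) :
    absSecondDiffQuot 0 y t w = (|w| - y * w) / t := by
  rw [absSecondDiffQuot, zero_add, abs_zero, abs_mul, abs_of_pos ht]
  field_simp
  ring

theorem eventually_abs_eq_mul_of_abs_subgradient {x y : ℝ}
    (hy : IsAbsSubgradient x y) (hx : x ≠ 0) : ∀ᶠ w in 𝓝 x, |w| = y * w := by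
  have hyx := mul_eq_abs_of_abs_subgradient hy
  rcases hx.lt_or_gt with hneg | hpos
  · have hy' : y = -1 := by
      rw [abs_of_neg hneg] at hyx
      exact mul_right_cancel₀ hx (by linarith)
    filter_upwards [eventually_lt_nhds hneg] with w hw
    rw [abs_of_neg hw, hy']
    ring
  · have hy' : y = 1 := by
      rw [abs_of_pos hpos] at hyx
      exact mul_right_cancel₀ hx (by linarith)
    filter_upwards [eventually_gt_nhds hpos] with w hw
    rw [abs_of_pos hw, hy', one_mul]

theorem Kset_zero_eq {y : ℝ} (hy : |y| ≤ 1) : Kset 0 y = {w | |w| = y * w} := by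
  ext w
  simp only [Kset, ne_eq, not_true_eq_false, if_false, mem_ofPred_eq]
  split_ifs with h1 h2
  · rw [h1, one_mul, abs_eq_self, mem_Ici]
  · rw [h2, neg_one_mul, abs_eq_neg_self, mem_Iic]
  · have hy' : |y| < 1 := lt_of_le_of_ne hy fun h => by
      rcases abs_eq_abs.1 (h.trans abs_one.symm) with h | h
      exacts [h1 h, h2 h]
    refine ⟨fun hw => by rw [mem_singleton_iff.1 hw]; simp, fun hw => ?_⟩
    by_contra hw0
    have : |y * w| < |w| := by
      rw [abs_mul]
      exact mul_lt_of_lt_one_left (abs_pos.2 hw0) hy'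
    exact this.ne (hw ▸ abs_abs w)

theorem absSecondDiffQuot_eventually_eq_zero {x y z : ℝ}
    (hy : IsAbsSubgradient x y) (hz : z ∈ Kset x y) :
    ∀ᶠ t in 𝓝[>] 0, absSecondDiffQuot x y t z = 0 := by
  rcases eq_or_ne x 0 with rfl | hx
  · rw [Kset_zero_eq (abs_le_one_of_abs_subgradient hy)] at hz
    filter_upwards [self_mem_nhdsWithin] with t ht
    rw [absSecondDiffQuot_zero_left y z ht, ← hz, sub_self, zero_div]
  · have hline : Tendsto (fun t : ℝ => x + t * z) (𝓝[>] 0) (𝓝 x) :=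
      ((by fun_prop : Continuous fun t : ℝ => x + t * z).tendsto' 0 x (by simp)).mono_left
        nhdsWithin_le_nhds
    filter_upwards [hline.eventually (eventually_abs_eq_mul_of_abs_subgradient hy hx)] with t ht
    rw [absSecondDiffQuot, ht, ← mul_eq_abs_of_abs_subgradient hy,
      show y * (x + t * z) - y * x - t * y * z = 0 by ring, zero_div]

theorem tendsto_absSecondDiffQuot_zero_atTop {y z : ℝ} (hy : |y| ≤ 1) (hz : z ∉ Kset 0 y)
    {zt : ℝ → ℝ} (hzt : Tendsto zt (𝓝[>] 0) (𝓝 z)) :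
    Tendsto (fun t => absSecondDiffQuot 0 y t (zt t)) (𝓝[>] 0) atTop := by
  rw [Kset_zero_eq hy, mem_ofPred_eq] at hz
  have hpos : 0 < |z| - y * z := sub_pos.2 ((mul_le_abs_of_abs_le_one hy z).lt_of_ne' hz)
  have hnum : Tendsto (fun t => |zt t| - y * zt t) (𝓝[>] 0) (𝓝 (|z| - y * z)) :=
    hzt.abs.sub (hzt.const_mul y)
  refine (hnum.pos_mul_atTop hpos tendsto_inv_nhdsGT_zero).congr' ?_
  filter_upwards [self_mem_nhdsWithin] with t ht
  rw [absSecondDiffQuot_zero_left y _ ht, div_eq_mul_inv]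

/-- The absolute value is twice epi-differentiable at any `x` for any `y ∈ ∂|·|(x)`, with
second-order epi-derivative the indicator function of `K_{x,y}`: the family of second-order
difference quotients `δ_t²(z) = (|x + t z| - |x| - t y z)/t²` Mosco epi-converges to
`I_{K_{x,y}}` as `t → 0⁺`. -/
theorem abs_twice_epi_differentiable
    (x y : ℝ) (hy : ∀ w : ℝ, y * (w - x) ≤ |w| - |x|) (z : ℝ) :
    -- (1) recovery family: if `z ∈ K_{x,y}`, there is a family converging to `z`
    -- whose difference quotients have `limsup ≤ 0 = I_{K_{x,y}}(z)`
    (z ∈ Kset x y → ∃ zt : ℝ → ℝ, Tendsto zt (𝓝[>] (0 : ℝ)) (𝓝 z) ∧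
      Filter.limsup
        (fun t : ℝ => (((|x + t * zt t| - |x| - t * y * zt t) / t ^ 2 : ℝ) : EReal))
        (𝓝[>] (0 : ℝ)) ≤ 0) ∧
    -- (2) lower bound: along any family converging to `z`
    (∀ zt : ℝ → ℝ, Tendsto zt (𝓝[>] (0 : ℝ)) (𝓝 z) →
      (z ∈ Kset x y →
        (0 : EReal) ≤ Filter.liminf
          (fun t : ℝ => (((|x + t * zt t| - |x| - t * y * zt t) / t ^ 2 : ℝ) : EReal))
          (𝓝[>] (0 : ℝ))) ∧
      (z ∉ Kset x y →
        Tendsto (fun t : ℝ => (|x + t * zt t| - |x| - t * y * zt t) / t ^ 2)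
          (𝓝[>] (0 : ℝ)) atTop)) := by
  refine ⟨fun hz => ⟨fun _ => z, tendsto_const_nhds, ?_⟩,
    fun zt hzt => ⟨fun _ => ?_, fun hz => ?_⟩⟩
  · refine limsup_le_of_le isCobounded_le_of_bot ?_
    filter_upwards [absSecondDiffQuot_eventually_eq_zero hy hz] with t ht
    exact EReal.coe_le_coe_iff.2 ht.le
  · refine le_liminf_of_le isCobounded_ge_of_top ?_
    filter_upwards [self_mem_nhdsWithin] with t ht
    exact EReal.coe_nonneg.2 (absSecondDiffQuot_nonneg hy ht _)
  · obtain rfl : x = 0 := by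
      by_contra hx
      exact hz (by simp [Kset, hx])
    exact tendsto_absSecondDiffQuot_zero_atTop (abs_le_one_of_abs_subgradient hy) hz hzt
end

section
/- Let x, y ∈ ℝ with y ∈ ∂|·|(x) and let z ∈ ℝ with z ∉ K_{x,y}. Then for every family (z_t)_{t>0} of real numbers converging to z as t → 0⁺, the quotient (|x + t z_t| − |x| − t y z_t)/t² tends to +∞ as t → 0⁺. -/
open Filter Topology Set

theorem second_order_quotient_abs_tendsto_atTop
    (x y : ℝ) (hy : ∀ w : ℝ, y * (w - x) ≤ |w| - |x|)
    (z : ℝ) (hz : z ∉ Kset x y)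
    (zt : ℝ → ℝ) (hzt : Tendsto zt (𝓝[>] (0 : ℝ)) (𝓝 z)) :
    Tendsto (fun t : ℝ => (|x + t * zt t| - |x| - t * y * zt t) / t ^ 2)
      (𝓝[>] (0 : ℝ)) atTop := by
  -- x must be 0
  have hx : x = 0 := by
    by_contra h
    simp [Kset, h] at hz
  subst hx
  -- |y| ≤ 1
  have hy1 : y ≤ 1 := by have := hy 1; simpa using this
  have hy2 : -1 ≤ y := by have := hy (-1); simp at this; linarith
  -- positivity of the limit
  have hc : 0 < |z| - y * z := by
    simp only [Kset] at hz
    rw [if_neg (by simp)] at hz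
    by_cases h1 : y = 1
    · rw [if_pos h1] at hz
      simp at hz
      subst h1
      rw [abs_of_neg hz]; linarith
    · rw [if_neg h1] at hz
      by_cases h2 : y = -1
      · rw [if_pos h2] at hz
        simp at hz
        subst h2
        rw [abs_of_pos hz]; linarith
      · rw [if_neg h2] at hz
        simp at hz
        have hzabs : 0 < |z| := abs_pos.mpr hz
        have : y * z ≤ |y * z| := le_abs_self _
        have hylt : |y| < 1 := by
          rcases lt_or_eq_of_le hy1 with h | h
          · rcases lt_or_eq_of_le hy2 with h' | h'
            · rw [abs_lt]; exact ⟨h', h⟩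
            · exact absurd h'.symm h2
          · exact absurd h h1
        have : |y * z| < |z| := by
          rw [abs_mul]
          calc |y| * |z| < 1 * |z| := by exact mul_lt_mul_of_pos_right hylt hzabs
            _ = |z| := one_mul _
        linarith
  -- the limit
  have hlim : Tendsto (fun t => |zt t| - y * zt t) (𝓝[>] (0 : ℝ)) (𝓝 (|z| - y * z)) :=
    ((continuous_abs.tendsto z).comp hzt).sub (hzt.const_mul y)
  have hinv : Tendsto (fun t : ℝ => t⁻¹) (𝓝[>] (0 : ℝ)) atTop := tendsto_inv_nhdsGT_zero
  have := hlim.pos_mul_atTop hc hinv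
  refine this.congr' ?_
  filter_upwards [self_mem_nhdsWithin] with t ht
  have ht' : (0 : ℝ) < t := ht
  rw [zero_add, abs_mul, abs_of_pos ht']
  field_simp
  ring
end
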